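/- Let Z^δ_t(u) denote the time-t value of a δ-dimensional squared Bessel process started at u. For any δ ≥ 0 and s, t > 0, the composition Z^δ_t(Z^{δ+2}_s(u)) (subordinating an independent δ-dimensional process at the time-s value of a (δ+2)-dimensional process) has the same law as 1_{I=0} Z^{δ+2}_{s+t}(u) + 1_{I=1} Z^δ_{s+t}(u), where I is a Bernoulli random variable with P(I=0) = s/(s+t), independent of the other variables. -/

import Mathlib

open MeasureTheory ProbabilityTheory Filter Set

noncomputable section

/-- A Brownian motion started at `x` on `(Ω, P)`: continuous paths, Gaussian increments,
independent increments. -/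
def IsBrownianMotion {Ω : Type*} [MeasurableSpace Ω] (P : Measure Ω)
    (W : ℝ → Ω → ℝ) (x : ℝ) : Prop :=
  IsProbabilityMeasure P ∧
  (∀ ω, Continuous fun t => W t ω) ∧
  (∀ t, Measurable (W t)) ∧
  (∀ ω, W 0 ω = x) ∧
  (∀ s t : ℝ, 0 ≤ s → s ≤ t →
      P.map (fun ω => W t ω - W s ω) = gaussianReal 0 (t - s).toNNReal) ∧
  (∀ (n : ℕ) (τ : Fin (n + 1) → ℝ), Monotone τ → (∀ i, 0 ≤ τ i) →
      iIndepFun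
        (fun (i : Fin n) ω => W (τ i.succ) ω - W (τ i.castSucc) ω) P)

/-- `l` is a (jointly continuous) local time family for the single path `W : ℝ → ℝ`:
occupation density with respect to Lebesgue measure. -/
def IsLocalTimeOf (W : ℝ → ℝ) (l : ℝ → ℝ → ℝ) : Prop :=
  Continuous (fun p : ℝ × ℝ => l p.1 p.2) ∧
  (∀ t x, 0 ≤ l t x) ∧
  (∀ t, 0 ≤ t → ∀ f : ℝ → ℝ, Measurable f → (∀ x, 0 ≤ f x) →
      ∫ s in Icc (0 : ℝ) t, f (W s) = ∫ x, f x * l t x)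

/-- `l` is a measurable family of local times for the process `W`. -/
def HasLocalTimes {Ω : Type*} [MeasurableSpace Ω] (W : ℝ → Ω → ℝ)
    (l : Ω → ℝ → ℝ → ℝ) : Prop :=
  (∀ ω, IsLocalTimeOf (fun t => W t ω) (l ω)) ∧
  (∀ t x, Measurable fun ω => l ω t x)

/-- First hitting time of level `a` by the path `W`. -/
def hitTime (W : ℝ → ℝ) (a : ℝ) : ℝ :=
  sInf {t | 0 ≤ t ∧ W t = a}

/-- Maximum of the path up to its first hitting time of `0`. -/
def maxBefore0 (W : ℝ → ℝ) : ℝ :=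
  sSup (W '' Icc 0 (hitTime W 0))

/-- The (a.s. unique) time at which the pre-`T₀` maximum is attained. -/
def argmaxTime (W : ℝ → ℝ) : ℝ :=
  sInf {t | 0 ≤ t ∧ W t = maxBefore0 W}

/-- `μ` is the law at time `t` of a squared Bessel process of dimension `δ` started
from `u`, characterized through its Laplace transform. -/
def IsBESQLaw (δ u t : ℝ) (μ : Measure ℝ) : Prop :=
  IsProbabilityMeasure μ ∧ (∀ᵐ v ∂μ, 0 ≤ v) ∧
  ∀ θ : ℝ, 0 ≤ θ →
    ∫ v, Real.exp (-θ * v) ∂μ =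
      (1 + 2 * θ * t) ^ (-(δ / 2)) * Real.exp (-(θ * u) / (1 + 2 * θ * t))

/-- `q` is the family of transition densities (on `(0,∞)`) of the squared Bessel process of
dimension `δ`; `q t u 0` records the mass of the atom at `0`. -/
def IsBESQDensity (δ : ℝ) (q : ℝ → ℝ → ℝ → ℝ) : Prop :=
  ∀ t u : ℝ, 0 < t → 0 ≤ u →
    (∀ v, 0 ≤ q t u v) ∧
    (Continuous fun p : ℝ × ℝ => q t p.1 p.2) ∧
    q t u 0 = 1 - ∫ v in Ioi (0 : ℝ), q t u v ∧
    IsBESQLaw δ u t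
      ((volume.restrict (Ioi (0 : ℝ))).withDensity (fun v => ENNReal.ofReal (q t u v))
        + (ENNReal.ofReal (q t u 0)) • Measure.dirac 0)

/-- The natural filtration of a process `W` (intersected with the ambient σ-algebra so that it
is always a filtration). -/
def natFilt {Ω : Type*} [m : MeasurableSpace Ω] (W : ℝ → Ω → ℝ) : Filtration ℝ m where
  seq t := (⨆ s ∈ Icc (0 : ℝ) t, MeasurableSpace.comap (W s) inferInstance) ⊓ m
  mono' s t hst := inf_le_inf_right _ <| biSup_mono fun r hr => ⟨hr.1, hr.2.trans hst⟩
  le' _ := inf_le_right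

/-- `Z` is a squared Bessel process of dimension `δ` started at `u`:  the Markov property is
encoded through the conditional Laplace transform of the increments. -/
def IsBESQProcess {Ω : Type*} [MeasurableSpace Ω] (δ : ℝ) (P : Measure Ω)
    (Z : ℝ → Ω → ℝ) (u : ℝ) : Prop :=
  IsProbabilityMeasure P ∧
  (∀ ω, Continuous fun t => Z t ω) ∧
  (∀ t, Measurable (Z t)) ∧
  (∀ ω, Z 0 ω = u) ∧
  (∀ t ω, 0 ≤ Z t ω) ∧
  ∀ s t θ : ℝ, 0 ≤ s → 0 < t → 0 ≤ θ →
    (P[(fun ω => Real.exp (-θ * Z (s + t) ω)) | natFilt Z s])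
      =ᵐ[P] fun ω =>
        (1 + 2 * θ * t) ^ (-(δ / 2)) * Real.exp (-(θ * Z s ω) / (1 + 2 * θ * t))

/-- A local martingale: there is a localizing sequence of stopping times. -/
def IsLocalMartingale {Ω : Type*} [m : MeasurableSpace Ω] (𝒢 : Filtration ℝ m)
    (P : Measure Ω) (M : ℝ → Ω → ℝ) : Prop :=
  ∃ τ : ℕ → Ω → ℝ,
    (∀ n, IsStoppingTime 𝒢 (fun ω => ((τ n ω : ℝ) : WithTop ℝ))) ∧
    (∀ᵐ ω ∂P, Tendsto (fun n => τ n ω) atTop atTop) ∧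
    ∀ n, Martingale (stoppedProcess (fun t ω => M (max t 0) ω) (fun ω => ((τ n ω : ℝ) : WithTop ℝ))) 𝒢 P

/-- A continuous semimartingale: sum of a continuous local martingale and a continuous adapted
process of locally bounded variation vanishing at time `0`. -/
def IsContSemimartingale {Ω : Type*} [m : MeasurableSpace Ω] (𝒢 : Filtration ℝ m)
    (P : Measure Ω) (B : ℝ → Ω → ℝ) : Prop :=
  ∃ N A : ℝ → Ω → ℝ,
    (∀ t ω, B t ω = N t ω + A t ω) ∧
    (∀ ω, Continuous fun t => N t ω) ∧
    (∀ ω, Continuous fun t => A t ω) ∧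
    IsLocalMartingale 𝒢 P N ∧
    Adapted 𝒢 A ∧
    (∀ ω, A 0 ω = 0) ∧
    (∀ ω t, BoundedVariationOn (fun s => A s ω) (Icc 0 t))

/-- `B` is a Brownian motion with respect to the filtration `𝒢`: adapted, Gaussian increments,
and increments independent of the past. -/
def IsFiltBrownian {Ω : Type*} [m : MeasurableSpace Ω] (𝒢 : Filtration ℝ m)
    (P : Measure Ω) (B : ℝ → Ω → ℝ) : Prop :=
  Adapted 𝒢 B ∧
  (∀ ω, Continuous fun t => B t ω) ∧
  (∀ ω, B 0 ω = 0) ∧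
  (∀ s t : ℝ, 0 ≤ s → s ≤ t →
      P.map (fun ω => B t ω - B s ω) = gaussianReal 0 (t - s).toNNReal ∧
      Indep (MeasurableSpace.comap (fun ω => B t ω - B s ω) inferInstance) (𝒢 s) P)

/-- Jacobi diffusion with dimensions `d₁ d₂` started at `y₀`, via the martingale problem for its
generator `2y(1-y) f'' + (d₁(1-y) - d₂ y) f'`. -/
def IsJacobi {Ω : Type*} [MeasurableSpace Ω] (d₁ d₂ : ℝ) (P : Measure Ω)
    (Y : ℝ → Ω → ℝ) (y₀ : ℝ) : Prop :=
  IsProbabilityMeasure P ∧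
  (∀ t, Measurable (Y t)) ∧
  (∀ᵐ ω ∂P, Continuous (fun t => Y t ω) ∧ Y 0 ω = y₀ ∧ ∀ t, Y t ω ∈ Icc (0 : ℝ) 1) ∧
  ∀ f : ℝ → ℝ, ContDiff ℝ 2 f →
    Martingale
      (fun t ω => f (Y (max t 0) ω) -
        ∫ s in (0 : ℝ)..(max t 0),
          (2 * Y s ω * (1 - Y s ω) * deriv (deriv f) (Y s ω) +
            (d₁ * (1 - Y s ω) - d₂ * Y s ω) * deriv f (Y s ω)))
      (natFilt Y) P

/-- The law (on path space `ℝ → ℝ` with the product σ-algebra, canonical process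
`f ↦ f t`) of a Jacobi diffusion with dimensions `d₁ d₂` started at `y₀`. -/
def IsJacobiLaw (d₁ d₂ : ℝ) (μ : Measure (ℝ → ℝ)) (y₀ : ℝ) : Prop :=
  IsJacobi d₁ d₂ μ (fun t f => f t) y₀

end
section LaplaceUniqueness

open scoped ENNReal NNReal

lemma integrable_exp_neg_theta {P : Measure ℝ} [IsFiniteMeasure P] (hP : ∀ᵐ x ∂P, 0 ≤ x)
    {θ : ℝ} (hθ : 0 ≤ θ) : Integrable (fun x => Real.exp (-θ * x)) P := by
  refine Integrable.mono' (integrable_const 1) ?_ ?_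
  · exact (Real.continuous_exp.comp (continuous_const.mul continuous_id)).aestronglyMeasurable
  · filter_upwards [hP] with x hx
    rw [Real.norm_eq_abs, abs_of_pos (Real.exp_pos _)]
    exact Real.exp_le_one_iff.2 (by nlinarith)

lemma integrable_monomial {ν : Measure ℝ} [IsFiniteMeasure ν]
    (hν : ∀ᵐ y ∂ν, y ∈ Icc (0:ℝ) 1) (n : ℕ) : Integrable (fun y : ℝ => y ^ n) ν := by
  refine Integrable.mono' (integrable_const 1) (continuous_pow n).aestronglyMeasurable ?_
  filter_upwards [hν] with y hy
  rw [Real.norm_eq_abs, abs_of_nonneg (pow_nonneg hy.1 n)]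
  exact pow_le_one₀ hy.1 hy.2

lemma integral_poly_eq {ν ρ : Measure ℝ} [IsFiniteMeasure ν] [IsFiniteMeasure ρ]
    (hν : ∀ᵐ y ∂ν, y ∈ Icc (0:ℝ) 1) (hρ : ∀ᵐ y ∂ρ, y ∈ Icc (0:ℝ) 1)
    (hmon : ∀ n : ℕ, ∫ y, y ^ n ∂ν = ∫ y, y ^ n ∂ρ) (p : Polynomial ℝ) :
    ∫ y, p.eval y ∂ν = ∫ y, p.eval y ∂ρ := by
  have hev : ∀ y : ℝ, p.eval y =
      ∑ i ∈ Finset.range (p.natDegree + 1), p.coeff i * y ^ i := fun y =>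
    Polynomial.eval_eq_sum_range y
  simp only [hev]
  rw [integral_finset_sum _ (fun i _ => (integrable_monomial hν i).const_mul _),
    integral_finset_sum _ (fun i _ => (integrable_monomial hρ i).const_mul _)]
  refine Finset.sum_congr rfl fun i _ => ?_
  rw [integral_const_mul, integral_const_mul, hmon i]

lemma integrable_poly {ν : Measure ℝ} [IsFiniteMeasure ν]
    (hν : ∀ᵐ y ∂ν, y ∈ Icc (0:ℝ) 1) (p : Polynomial ℝ) :
    Integrable (fun y => p.eval y) ν := by
  have hev : ∀ y : ℝ, p.eval y =
      ∑ i ∈ Finset.range (p.natDegree + 1), p.coeff i * y ^ i := fun y =>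
    Polynomial.eval_eq_sum_range y
  simp only [hev]
  exact integrable_finset_sum _ (fun i _ => (integrable_monomial hν i).const_mul _)

lemma integral_cont_eq {ν ρ : Measure ℝ} [IsFiniteMeasure ν] [IsFiniteMeasure ρ]
    (hν : ∀ᵐ y ∂ν, y ∈ Icc (0:ℝ) 1) (hρ : ∀ᵐ y ∂ρ, y ∈ Icc (0:ℝ) 1)
    (hmon : ∀ n : ℕ, ∫ y, y ^ n ∂ν = ∫ y, y ^ n ∂ρ)
    (g : ℝ → ℝ) (hg : Continuous g) (hgi : Integrable g ν) (hgi' : Integrable g ρ) :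
    ∫ y, g y ∂ν = ∫ y, g y ∂ρ := by
  set A := ∫ y, g y ∂ν with hA
  set B := ∫ y, g y ∂ρ with hB
  set M := (ν univ).toReal + (ρ univ).toReal with hM
  have hM0 : 0 ≤ M := by positivity
  have key : ∀ ε : ℝ, 0 < ε → |A - B| ≤ ε * M := by
    intro ε hε
    obtain ⟨p, hp⟩ := exists_polynomial_near_continuousMap 0 1
      (ContinuousMap.restrict (Icc (0:ℝ) 1) ⟨g, hg⟩) ε hε
    have hbound : ∀ y ∈ Icc (0:ℝ) 1, |g y - p.eval y| ≤ ε := by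
      intro y hy
      have := ContinuousMap.norm_coe_le_norm
        (p.toContinuousMapOn (Icc (0:ℝ) 1) - ContinuousMap.restrict (Icc (0:ℝ) 1) ⟨g, hg⟩)
        ⟨y, hy⟩
      simp only [ContinuousMap.sub_apply, Polynomial.toContinuousMapOn_apply,
        ContinuousMap.restrict_apply, Polynomial.toContinuousMap_apply,
        ContinuousMap.coe_mk] at this
      rw [Real.norm_eq_abs] at this
      rw [abs_sub_comm]
      exact this.trans hp.le
    have hiν : Integrable (fun y => g y - p.eval y) ν := hgi.sub (integrable_poly hν p)
    have hiρ : Integrable (fun y => g y - p.eval y) ρ := hgi'.sub (integrable_poly hρ p)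
    have hpe := integral_poly_eq hν hρ hmon p
    have hsplit : A - B = (∫ y, (g y - p.eval y) ∂ν) - ∫ y, (g y - p.eval y) ∂ρ := by
      rw [integral_sub hgi (integrable_poly hν p), integral_sub hgi' (integrable_poly hρ p), hpe]
      ring
    have h1 : ‖∫ y, (g y - p.eval y) ∂ν‖ ≤ ε * (ν univ).toReal := by
      refine norm_integral_le_of_norm_le_const ?_
      filter_upwards [hν] with y hy
      rw [Real.norm_eq_abs]; exact hbound y hy
    have h2 : ‖∫ y, (g y - p.eval y) ∂ρ‖ ≤ ε * (ρ univ).toReal := by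
      refine norm_integral_le_of_norm_le_const ?_
      filter_upwards [hρ] with y hy
      rw [Real.norm_eq_abs]; exact hbound y hy
    calc |A - B| ≤ ‖∫ y, (g y - p.eval y) ∂ν‖ + ‖∫ y, (g y - p.eval y) ∂ρ‖ := by
          rw [hsplit]; exact abs_sub (_ : ℝ) _
      _ ≤ ε * (ν univ).toReal + ε * (ρ univ).toReal := add_le_add h1 h2
      _ = ε * M := by rw [hM]; ring
  have habs : |A - B| ≤ 0 := by
    by_contra hlt
    push_neg at hlt
    have hk := key (|A - B| / (2 * (M + 1))) (by positivity)
    rw [div_mul_eq_mul_div] at hk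
    have hk2 : |A - B| * (2 * (M + 1)) ≤ |A - B| * M :=
      (le_div_iff₀ (by positivity)).mp hk
    nlinarith [abs_nonneg (A - B)]
  have := abs_nonneg (A - B)
  have : |A - B| = 0 := le_antisymm habs this
  have := abs_eq_zero.mp this
  linarith

/-- Finite measures on `[0, ∞)` are determined by their Laplace transforms. -/
lemma ext_of_laplace {P Q : Measure ℝ} [IsFiniteMeasure P] [IsFiniteMeasure Q]
    (hP : ∀ᵐ x ∂P, 0 ≤ x) (hQ : ∀ᵐ x ∂Q, 0 ≤ x)
    (h : ∀ θ : ℝ, 0 ≤ θ → ∫ x, Real.exp (-θ * x) ∂P = ∫ x, Real.exp (-θ * x) ∂Q) :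
    P = Q := by
  set φ : ℝ → ℝ := fun x => Real.exp (-x) with hφdef
  have hφc : Continuous φ := Real.continuous_exp.comp continuous_neg
  have hφ : Measurable φ := hφc.measurable
  set ν := P.map φ with hνdef
  set ρ := Q.map φ with hρdef
  haveI : IsFiniteMeasure ν := Measure.isFiniteMeasure_map P φ
  haveI : IsFiniteMeasure ρ := Measure.isFiniteMeasure_map Q φ
  have hIcc : ∀ x : ℝ, 0 ≤ x → φ x ∈ Icc (0:ℝ) 1 :=
    fun x hx => ⟨(Real.exp_pos _).le, Real.exp_le_one_iff.2 (by linarith)⟩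
  have hν : ∀ᵐ y ∂ν, y ∈ Icc (0:ℝ) 1 := by
    refine (ae_map_iff hφ.aemeasurable measurableSet_Icc).2 ?_
    filter_upwards [hP] with x hx using hIcc x hx
  have hρ : ∀ᵐ y ∂ρ, y ∈ Icc (0:ℝ) 1 := by
    refine (ae_map_iff hφ.aemeasurable measurableSet_Icc).2 ?_
    filter_upwards [hQ] with x hx using hIcc x hx
  have hmap : ∀ (R : Measure ℝ) (n : ℕ),
      ∫ y, y ^ n ∂(R.map φ) = ∫ x, Real.exp (-(n : ℝ) * x) ∂ R := by
    intro R n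
    rw [integral_map hφ.aemeasurable (continuous_pow n).aestronglyMeasurable]
    congr 1 with x
    rw [hφdef]
    rw [← Real.exp_nat_mul]
    ring_nf
  have hmon : ∀ n : ℕ, ∫ y, y ^ n ∂ν = ∫ y, y ^ n ∂ρ := by
    intro n
    rw [hνdef, hρdef, hmap, hmap]
    exact h n (Nat.cast_nonneg n)
  have hνρ : ν = ρ := by
    apply ext_of_forall_lintegral_eq_of_IsFiniteMeasure
    intro f
    obtain ⟨C, hC⟩ := f.bounded
    have hgc : Continuous fun y => (f y : ℝ) := NNReal.continuous_coe.comp f.continuous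
    have hgi : ∀ (R : Measure ℝ) (_ : IsFiniteMeasure R),
        Integrable (fun y => (f y : ℝ)) R := by
      intro R hR
      refine Integrable.mono' (integrable_const ((f 0 : ℝ) + C)) hgc.aestronglyMeasurable ?_
      refine Eventually.of_forall fun y => ?_
      rw [Real.norm_eq_abs, abs_of_nonneg (f y).coe_nonneg]
      have := hC y 0
      rw [NNReal.dist_eq] at this
      have h2 := abs_le.mp this
      linarith [h2.1, h2.2]
    have hconv : ∀ (R : Measure ℝ) (_ : IsFiniteMeasure R),
        ∫⁻ y, (f y : ℝ≥0∞) ∂ R = ENNReal.ofReal (∫ y, (f y : ℝ) ∂ R) := by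
      intro R hR
      rw [ofReal_integral_eq_lintegral_ofReal (hgi R hR)
        (Eventually.of_forall fun y => (f y).coe_nonneg)]
      simp [ENNReal.ofReal_coe_nnreal]
    rw [hconv ν inferInstance, hconv ρ inferInstance,
      integral_cont_eq hν hρ hmon _ hgc (hgi ν inferInstance) (hgi ρ inferInstance)]
  have hψ : Measurable fun y : ℝ => -Real.log y := Real.measurable_log.neg
  have hcomp : ∀ (R : Measure ℝ), (R.map φ).map (fun y => -Real.log y) = R := by
    intro R
    rw [Measure.map_map hψ hφ]
    have : ((fun y => -Real.log y) ∘ φ) = id := by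
      funext x
      simp [hφdef, Real.log_exp]
    rw [this, Measure.map_id]
  calc P = (P.map φ).map (fun y => -Real.log y) := (hcomp P).symm
    _ = (Q.map φ).map (fun y => -Real.log y) := by rw [← hνdef, ← hρdef, hνρ]
    _ = Q := hcomp Q

end LaplaceUniqueness


/-- subordination identity: running an independent `δ`-dimensional squared Bessel
process for time `t` from the time-`s` value of a `(δ+2)`-dimensional one started at `u`
gives the mixture `(s/(s+t)) BESQ^{δ+2}_{s+t}(u) + (t/(s+t)) BESQ^δ_{s+t}(u)`,
i.e. the Bernoulli `I` with `P(I=0)=s/(s+t)` randomization. -/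
theorem statement3 (δ u s t : ℝ) (hδ : 0 ≤ δ) (hu : 0 ≤ u) (hs : 0 < s) (ht : 0 < t)
    (μ : Measure ℝ) (K : ℝ → Measure ℝ) (hK : Measurable K)
    (hμ : IsBESQLaw (δ + 2) u s μ) (hKlaw : ∀ v : ℝ, 0 ≤ v → IsBESQLaw δ v t (K v))
    (ν₁ ν₂ : Measure ℝ)
    (hν₁ : IsBESQLaw (δ + 2) u (s + t) ν₁) (hν₂ : IsBESQLaw δ u (s + t) ν₂) :
    μ.bind K = (ENNReal.ofReal (s / (s + t))) • ν₁ + (ENNReal.ofReal (t / (s + t))) • ν₂ := by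
  obtain ⟨hμP, hμae, hμL⟩ := hμ
  obtain ⟨hν₁P, hν₁ae, hν₁L⟩ := hν₁
  obtain ⟨hν₂P, hν₂ae, hν₂L⟩ := hν₂
  haveI := hμP; haveI := hν₁P; haveI := hν₂P
  have hst : 0 < s + t := by linarith
  -- the mixture measure
  set Q : Measure ℝ :=
    (ENNReal.ofReal (s / (s + t))) • ν₁ + (ENNReal.ofReal (t / (s + t))) • ν₂ with hQdef
  -- μ.bind K is a probability measure
  haveI hbindP : IsProbabilityMeasure (μ.bind K) := by
    constructor
    rw [Measure.bind_apply MeasurableSet.univ hK.aemeasurable]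
    have h1 : ∀ᵐ v ∂μ, K v univ = 1 := by
      filter_upwards [hμae] with v hv
      haveI := (hKlaw v hv).1
      exact measure_univ
    rw [lintegral_congr_ae h1, lintegral_one, measure_univ]
  -- Q is a finite measure
  haveI hQfin : IsFiniteMeasure Q := by
    constructor
    rw [hQdef, Measure.add_apply, Measure.smul_apply, Measure.smul_apply,
      measure_univ, measure_univ, smul_eq_mul, smul_eq_mul, mul_one, mul_one]
    exact ENNReal.add_lt_top.2 ⟨ENNReal.ofReal_lt_top, ENNReal.ofReal_lt_top⟩
  -- a.e. nonnegativity
  have hnegset : {x : ℝ | ¬ 0 ≤ x} = Iio 0 := by ext x; simp [not_le]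
  have hbindae : ∀ᵐ x ∂(μ.bind K), 0 ≤ x := by
    rw [ae_iff, hnegset, Measure.bind_apply measurableSet_Iio hK.aemeasurable]
    have h1 : ∀ᵐ v ∂μ, K v (Iio 0) = 0 := by
      filter_upwards [hμae] with v hv
      have h2 := (hKlaw v hv).2.1
      rw [ae_iff, hnegset] at h2
      exact h2
    rw [lintegral_congr_ae h1, lintegral_zero]
  have hQae : ∀ᵐ x ∂Q, 0 ≤ x := by
    rw [ae_iff, hnegset, hQdef]
    have h1 : ν₁ (Iio 0) = 0 := by rw [← hnegset]; exact (ae_iff.mp hν₁ae)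
    have h2 : ν₂ (Iio 0) = 0 := by rw [← hnegset]; exact (ae_iff.mp hν₂ae)
    simp [Measure.add_apply, Measure.smul_apply, h1, h2]
  -- Laplace transform of the left-hand side
  have hLHS : ∀ θ : ℝ, 0 ≤ θ →
      ∫ x, Real.exp (-θ * x) ∂(μ.bind K) =
        (1 + 2 * θ * t) ^ (-(δ / 2)) *
          ((1 + 2 * (θ / (1 + 2 * θ * t)) * s) ^ (-((δ + 2) / 2)) *
            Real.exp (-(θ / (1 + 2 * θ * t) * u) / (1 + 2 * (θ / (1 + 2 * θ * t)) * s))) := by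
    intro θ hθ
    have hA : (0:ℝ) < 1 + 2 * θ * t := by nlinarith
    have hθ' : 0 ≤ θ / (1 + 2 * θ * t) := div_nonneg hθ hA.le
    have hcont : Continuous fun x : ℝ => Real.exp (-θ * x) :=
      Real.continuous_exp.comp (continuous_const.mul continuous_id)
    have hmeasE : Measurable fun x : ℝ => ENNReal.ofReal (Real.exp (-θ * x)) :=
      hcont.measurable.ennreal_ofReal
    rw [integral_eq_lintegral_of_nonneg_ae
      (Eventually.of_forall fun x => (Real.exp_pos _).le) hcont.aestronglyMeasurable]
    rw [Measure.lintegral_bind hK.aemeasurable hmeasE.aemeasurable]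
    have hinner : ∀ᵐ v ∂μ, ∫⁻ x, ENNReal.ofReal (Real.exp (-θ * x)) ∂(K v)
        = ENNReal.ofReal ((1 + 2 * θ * t) ^ (-(δ / 2)) *
            Real.exp (-(θ / (1 + 2 * θ * t)) * v)) := by
      filter_upwards [hμae] with v hv
      haveI := (hKlaw v hv).1
      rw [← ofReal_integral_eq_lintegral_ofReal
        (integrable_exp_neg_theta (hKlaw v hv).2.1 hθ)
        (Eventually.of_forall fun x => (Real.exp_pos _).le)]
      congr 1
      rw [(hKlaw v hv).2.2 θ hθ]
      congr 1
      rw [Real.exp_eq_exp]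
      field_simp
    rw [lintegral_congr_ae hinner]
    have hintg : Integrable (fun v => (1 + 2 * θ * t) ^ (-(δ / 2)) *
        Real.exp (-(θ / (1 + 2 * θ * t)) * v)) μ :=
      (integrable_exp_neg_theta hμae hθ').const_mul _
    rw [← ofReal_integral_eq_lintegral_ofReal hintg
      (Eventually.of_forall fun v =>
        mul_nonneg (Real.rpow_nonneg hA.le _) (Real.exp_pos _).le)]
    rw [ENNReal.toReal_ofReal
      (integral_nonneg fun v =>
        mul_nonneg (Real.rpow_nonneg hA.le _) (Real.exp_pos _).le)]
    rw [integral_const_mul, hμL (θ / (1 + 2 * θ * t)) hθ']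
  -- Laplace transform of the right-hand side
  have hRHS : ∀ θ : ℝ, 0 ≤ θ →
      ∫ x, Real.exp (-θ * x) ∂Q =
        s / (s + t) * ((1 + 2 * θ * (s + t)) ^ (-((δ + 2) / 2)) *
            Real.exp (-(θ * u) / (1 + 2 * θ * (s + t)))) +
        t / (s + t) * ((1 + 2 * θ * (s + t)) ^ (-(δ / 2)) *
            Real.exp (-(θ * u) / (1 + 2 * θ * (s + t)))) := by
    intro θ hθ
    have hi₁ : Integrable (fun x => Real.exp (-θ * x)) ν₁ :=
      integrable_exp_neg_theta hν₁ae hθ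
    have hi₂ : Integrable (fun x => Real.exp (-θ * x)) ν₂ :=
      integrable_exp_neg_theta hν₂ae hθ
    rw [hQdef, integral_add_measure
      (hi₁.smul_measure ENNReal.ofReal_ne_top)
      (hi₂.smul_measure ENNReal.ofReal_ne_top),
      integral_smul_measure, integral_smul_measure,
      ENNReal.toReal_ofReal (by positivity), ENNReal.toReal_ofReal (by positivity),
      hν₁L θ hθ, hν₂L θ hθ, smul_eq_mul, smul_eq_mul]
  -- the two Laplace transforms coincide
  have halg : ∀ θ : ℝ, 0 ≤ θ →
      (1 + 2 * θ * t) ^ (-(δ / 2)) *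
          ((1 + 2 * (θ / (1 + 2 * θ * t)) * s) ^ (-((δ + 2) / 2)) *
            Real.exp (-(θ / (1 + 2 * θ * t) * u) / (1 + 2 * (θ / (1 + 2 * θ * t)) * s))) =
      s / (s + t) * ((1 + 2 * θ * (s + t)) ^ (-((δ + 2) / 2)) *
            Real.exp (-(θ * u) / (1 + 2 * θ * (s + t)))) +
        t / (s + t) * ((1 + 2 * θ * (s + t)) ^ (-(δ / 2)) *
            Real.exp (-(θ * u) / (1 + 2 * θ * (s + t)))) := by
    intro θ hθ
    have hA : (0:ℝ) < 1 + 2 * θ * t := by nlinarith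
    have hB : (0:ℝ) < 1 + 2 * θ * (s + t) := by nlinarith
    set A : ℝ := 1 + 2 * θ * t with hAdef
    set B : ℝ := 1 + 2 * θ * (s + t) with hBdef
    have h1 : 1 + 2 * (θ / A) * s = B / A := by
      rw [hAdef, hBdef]; field_simp; ring
    have hA0 : A ≠ 0 := hA.ne'
    have hB0 : B ≠ 0 := hB.ne'
    have h2 : -(θ / A * u) / (B / A) = -(θ * u) / B := by
      rw [div_eq_div_iff (div_pos hB hA).ne' hB0]
      field_simp
    rw [h1, h2]
    set e : ℝ := -((δ + 2) / 2) with hedef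
    set E : ℝ := Real.exp (-(θ * u) / B) with hEdef
    have h3 : (B / A) ^ e = B ^ e / A ^ e := Real.div_rpow hB.le hA.le _
    have h5 : B ^ (-(δ / 2)) = B ^ e * B := by
      have he1 : -(δ / 2) = e + 1 := by rw [hedef]; ring
      rw [he1, Real.rpow_add hB, Real.rpow_one]
    have hkey : -(δ / 2) = 1 + e := by rw [hedef]; ring
    rw [h3, h5, hkey, Real.rpow_add hA, Real.rpow_one]
    have hAe : A ^ e ≠ 0 := (Real.rpow_pos_of_pos hA e).ne'
    have hL : A * A ^ e * (B ^ e / A ^ e * E) = A * (B ^ e * E) := by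
      field_simp
    rw [hL]
    have h7 : s + t * B = A * (s + t) := by rw [hAdef, hBdef]; ring
    have h6 : s / (s + t) * (B ^ e * E) + t / (s + t) * (B ^ e * B * E)
        = (s + t * B) / (s + t) * (B ^ e * E) := by
      field_simp
    rw [h6, h7, mul_div_assoc, div_self hst.ne', mul_one]
  refine ext_of_laplace hbindae hQae ?_
  intro θ hθ
  rw [hLHS θ hθ, hRHS θ hθ, halg θ hθ]
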